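/- Let A_n be a flat associative algebra over R_n flat over Z/p^{n+1}Z. If x ∈ Z_i (center of A_i) and x̃ ∈ A_n is any lifting, then x̃^p mod p^{i+2} lies in Z_{i+1} and is independent of the choice of lifting. -/

import Mathlib

/-!
Work modulo `p^(i+2)` and put `q = p^(i+1)`, so that `q² = 0` and `p q = 0`. An element `x`
central modulo `q` then commutes with every multiple `q b`, because
`x (q b) - (q b) x = q [x, b] ∈ q² A`. Hence both the difference `x - x' = q a` and the
commutator `[x, a] = q b` commute with `x`, and the expansions of `x'^p = (x - q a)^p` and of
`[x^p, a]` stop at their first-order terms, which are `p`-fold multiples of elements of `q A`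
and therefore vanish.
-/

section

variable {R : Type*} [Ring R]

/-- At `m = 0` the truncated exponent `m - 1` is harmless, the term being `0 • _`. -/
theorem pow_mul_eq_mul_pow_add_nsmul {x y a d : R} (h : x * a = a * y + d) (hxd : Commute x d)
    (hdy : d * y = d * x) (m : ℕ) : x ^ m * a = a * y ^ m + m • (d * x ^ (m - 1)) := by
  have hdy_pow : ∀ k : ℕ, d * y ^ k = d * x ^ k := by
    intro k
    induction k with
    | zero => simp
    | succ k ih =>
      rw [pow_succ', ← mul_assoc, hdy, ← hxd.eq, mul_assoc, ih, ← mul_assoc, hxd.eq, mul_assoc,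
        ← pow_succ']
  induction m with
  | zero => simp
  | succ m ih =>
    have hdx : x * (m • (d * x ^ (m - 1))) = m • (d * x ^ m) := by
      cases m with
      | zero => simp
      | succ k =>
        rw [mul_smul_comm, ← mul_assoc, hxd.eq, mul_assoc, ← pow_succ', Nat.add_sub_cancel]
    calc x ^ (m + 1) * a = x * (x ^ m * a) := by rw [pow_succ', mul_assoc]
      _ = (x * a) * y ^ m + x * (m • (d * x ^ (m - 1))) := by rw [ih, mul_add, mul_assoc]
      _ = a * y ^ (m + 1) + (m + 1) • (d * x ^ m) := by
        rw [h, hdx, add_mul, mul_assoc, ← pow_succ', hdy_pow, succ_nsmul]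
        abel

theorem pow_eq_pow_of_eq_add_of_mul_self_eq_zero {p : ℕ} {x y d : R} (h : x = y + d)
    (hxd : Commute x d) (hdd : d * d = 0) (hpd : p • d = 0) : x ^ p = y ^ p := by
  have hdy : d * y = d * x := by rw [h, mul_add, hdd, add_zero]
  have := pow_mul_eq_mul_pow_add_nsmul (a := 1) (by rw [mul_one, one_mul, h]) hxd hdy p
  rwa [← smul_mul_assoc, hpd, zero_mul, add_zero, mul_one, one_mul] at this

theorem commute_pow_of_mul_sub_mul_eq {p : ℕ} {x a d : R} (h : x * a - a * x = d)
    (hxd : Commute x d) (hpd : p • d = 0) : Commute (x ^ p) a := by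
  have := pow_mul_eq_mul_pow_add_nsmul (eq_add_of_sub_eq' h) hxd rfl p
  rwa [← smul_mul_assoc, hpd, zero_mul, add_zero] at this

def IsCentralMod (q x : R) : Prop :=
  ∀ a, ∃ b, x * a - a * x = q * b

namespace IsCentralMod

variable {p : ℕ} {q x : R}

theorem map {S : Type*} [Ring S] (hx : IsCentralMod q x) (f : R →+* S)
    (hf : Function.Surjective f) : IsCentralMod (f q) (f x) :=
  hf.forall.2 fun a => by
    obtain ⟨b, hb⟩ := hx a
    exact ⟨f b, by rw [← map_mul, ← map_mul, ← map_sub, hb, map_mul]⟩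

theorem commute_mul (hx : IsCentralMod q x) (hqx : Commute q x) (hqq : q * q = 0) (b : R) :
    Commute x (q * b) := by
  obtain ⟨c, hc⟩ := hx b
  refine sub_eq_zero.1 ?_
  rw [← mul_assoc, ← hqx.eq, mul_assoc, mul_assoc, ← mul_sub, hc, ← mul_assoc, hqq, zero_mul]

theorem pow_eq_pow (hx : IsCentralMod q x) (hq : ∀ y, Commute q y) (hqq : q * q = 0)
    (hpq : p • q = 0) {x' a : R} (hxx' : x - x' = q * a) : x ^ p = x' ^ p := by
  refine pow_eq_pow_of_eq_add_of_mul_self_eq_zero (eq_add_of_sub_eq' hxx')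
    (hx.commute_mul (hq x) hqq a) ?_ (by rw [← smul_mul_assoc, hpq, zero_mul])
  rw [mul_assoc, (hq a).symm.left_comm, ← mul_assoc, hqq, zero_mul]

theorem commute_pow (hx : IsCentralMod q x) (hqx : Commute q x) (hqq : q * q = 0)
    (hpq : p • q = 0) (a : R) : Commute (x ^ p) a := by
  obtain ⟨b, hb⟩ := hx a
  exact commute_pow_of_mul_sub_mul_eq hb (hx.commute_mul hqx hqq b)
    (by rw [← smul_mul_assoc, hpq, zero_mul])

end IsCentralMod

end

namespace TwoSidedIdeal

variable {R : Type*} [Ring R]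

def spanCentral (N : R) (hN : ∀ y, Commute N y) : TwoSidedIdeal R :=
  mk' {y | ∃ c, y = N * c} ⟨0, (mul_zero N).symm⟩
    (fun ⟨c, hc⟩ ⟨c', hc'⟩ => ⟨c + c', by rw [hc, hc', mul_add]⟩)
    (fun ⟨c, hc⟩ => ⟨-c, by rw [hc, mul_neg]⟩)
    (fun {y _} ⟨c, hc⟩ => ⟨y * c, by rw [hc, ← mul_assoc, ← (hN y).eq, mul_assoc]⟩)
    (fun {_ y} ⟨c, hc⟩ => ⟨c * y, by rw [hc, mul_assoc]⟩)

theorem mk'_spanCentral_eq_zero_iff {N : R} {hN : ∀ y, Commute N y} {y : R} :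
    (spanCentral N hN).ringCon.mk' y = 0 ↔ ∃ c, y = N * c := by
  rw [← mem_ker, ker_ringCon_mk']
  exact mem_mk' ..

end TwoSidedIdeal

theorem pow_p_central_well_defined_general (p : ℕ)
    (A : Type*) [Ring A]
    (i : ℕ) (x x' : A)
    (hx : ∀ a : A, ∃ b : A, x * a - a * x = (p : A) ^ (i + 1) * b)
    (hxx' : ∃ a : A, x - x' = (p : A) ^ (i + 1) * a) :
    (∃ a : A, x ^ p - x' ^ p = (p : A) ^ (i + 2) * a) ∧
    (∀ a : A, ∃ b : A, x ^ p * a - a * x ^ p = (p : A) ^ (i + 2) * b) := by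
  set q : A := (p : A) ^ (i + 1)
  let π := (TwoSidedIdeal.spanCentral ((p : A) ^ (i + 2))
    fun y => (Nat.cast_commute p y).pow_left _).ringCon.mk'
  have hπ : ∀ y, π y = 0 ↔ ∃ c, y = (p : A) ^ (i + 2) * c := fun _ =>
    TwoSidedIdeal.mk'_spanCentral_eq_zero_iff
  have hq : ∀ y, Commute (π q) y :=
    RingCon.mk'_surjective _ |>.forall.2 fun y => ((Nat.cast_commute p y).pow_left _).map π
  have hqq : π q * π q = 0 := by
    rw [← map_mul, hπ, ← pow_add, show i + 1 + (i + 1) = i + 2 + i by omega, pow_add]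
    exact ⟨_, rfl⟩
  have hpq : p • π q = 0 := by
    rw [← map_nsmul, hπ, nsmul_eq_mul, ← pow_succ']
    exact ⟨1, (mul_one _).symm⟩
  have hxπ : IsCentralMod (π q) (π x) := IsCentralMod.map hx π (RingCon.mk'_surjective _)
  obtain ⟨a, ha⟩ := hxx'
  refine ⟨(hπ _).1 ?_, fun b => (hπ _).1 ?_⟩
  · rw [map_sub, map_pow, map_pow, sub_eq_zero]
    exact hxπ.pow_eq_pow hq hqq hpq (by rw [← map_sub, ha, map_mul])
  · rw [map_sub, map_mul, map_mul, map_pow, sub_eq_zero]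
    exact hxπ.commute_pow (hq _) hqq hpq (π b)

/-- Lemma 1.1(5): Let `A = A_n` be flat over `ℤ/p^{n+1}ℤ`.  If `x` and `x'`
are liftings of the same element of the center `Z_i` of `A_i = A/p^{i+1}A` (i.e. both are
central modulo `p^{i+1}` and `x ≡ x' mod p^{i+1}`), with `i + 1 ≤ n`, then
`x^p ≡ x'^p mod p^{i+2}` and `x^p mod p^{i+2}` is central in `A_{i+1}`. -/
theorem pow_p_central_well_defined (p n : ℕ) (hp : p.Prime)
    (A : Type*) [Ring A]
    (hchar : (p : A) ^ (n + 1) = 0)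
    (hflat : ∀ k ≤ n + 1, ∀ a : A, (p : A) ^ k * a = 0 → ∃ b : A, a = (p : A) ^ (n + 1 - k) * b)
    (i : ℕ) (hi : i + 1 ≤ n) (x x' : A)
    (hx : ∀ a : A, ∃ b : A, x * a - a * x = (p : A) ^ (i + 1) * b)
    (hx' : ∀ a : A, ∃ b : A, x' * a - a * x' = (p : A) ^ (i + 1) * b)
    (hxx' : ∃ a : A, x - x' = (p : A) ^ (i + 1) * a) :
    (∃ a : A, x ^ p - x' ^ p = (p : A) ^ (i + 2) * a) ∧
    (∀ a : A, ∃ b : A, x ^ p * a - a * x ^ p = (p : A) ^ (i + 2) * b) :=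
  pow_p_central_well_defined_general p A i x x' hx hxx'
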